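/- Let 𝓘 be a family of ideals of P. Then the supremum in the clone lattice of the clones C_I for I ∈ 𝓘 equals C_{⋁𝓘}, where ⋁𝓘 is the supremum of 𝓘 in the lattice of ideals of P (the ideal generated by ⋃𝓘). -/

import Mathlib

universe u v

/-- A clone on `X`: a set of finitary operations (of each arity `n + 1 ≥ 1`)
containing all projections and closed under composition. -/
structure Clone (X : Type u) where
  carrier : ∀ n : ℕ, Set ((Fin (n + 1) → X) → X)
  proj_mem : ∀ (n : ℕ) (i : Fin (n + 1)), (fun x => x i) ∈ carrier n
  comp_mem : ∀ {m n : ℕ} (f : (Fin (m + 1) → X) → X)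
      (g : Fin (m + 1) → (Fin (n + 1) → X) → X),
      f ∈ carrier m → (∀ i, g i ∈ carrier n) →
      (fun x => f fun i => g i x) ∈ carrier n

namespace Clone

variable {X : Type u}

theorem carrier_injective : Function.Injective (Clone.carrier (X := X)) := by
  rintro ⟨c, _, _⟩ ⟨d, _, _⟩ h
  simpa using h

instance : PartialOrder (Clone X) where
  le C D := ∀ n, C.carrier n ⊆ D.carrier n
  le_refl _ _ := subset_rfl
  le_trans _ _ _ h₁ h₂ n := (h₁ n).trans (h₂ n)
  le_antisymm _ _ h₁ h₂ :=
    carrier_injective (funext fun n => subset_antisymm (h₁ n) (h₂ n))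

instance : InfSet (Clone X) where
  sInf S :=
    { carrier := fun n => ⋂ C ∈ S, C.carrier n
      proj_mem := fun n i => Set.mem_iInter₂.2 fun C _ => C.proj_mem n i
      comp_mem := fun f g hf hg => Set.mem_iInter₂.2 fun C hC =>
        C.comp_mem f g (Set.mem_iInter₂.1 hf C hC)
          fun i => Set.mem_iInter₂.1 (hg i) C hC }

/-- The lattice `Cl(X)` of all clones on `X` is a complete lattice
(with infima given by intersection). -/
instance : CompleteLattice (Clone X) :=
  completeLatticeOfInf (Clone X) (fun S =>
    ⟨fun C hC n _ hx => Set.mem_iInter₂.1 hx C hC,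
     fun _ hD n _ hx => Set.mem_iInter₂.2 fun C hC => hD hC n hx⟩)

/-- The clone generated by a family `F` of operations:
the smallest clone whose carrier contains `F`. -/
def cloneGen (F : ∀ n : ℕ, Set ((Fin (n + 1) → X) → X)) : Clone X :=
  sInf {C : Clone X | ∀ n, F n ⊆ C.carrier n}

end Clone

attribute [local instance] Classical.propDecidable

noncomputable section Construction

variable {X : Type u} {P : Type v} [SemilatticeSup P]
variable (e0 e1 e2 e4 : X) (Af : P → Set X)

/-- `A = X ∖ {0, 1, 2, 4}`. -/
def Aset : Set X := ({e0, e1, e2, e4} : Set X)ᶜ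

/-- The unary function `φ_p`: the characteristic function of `A_p` on `A`,
fixing `2` and sending `{0, 1, 4}` to `4`. -/
def phi (p : P) (x : X) : X :=
  if x ∈ Af p then e1
  else if x ∈ Aset e0 e1 e2 e4 then e0
  else if x = e2 then e2
  else e4

/-- The ternary function `m_p^{q₁,q₂}`. -/
def mOp (p q1 q2 : P) (x y z : X) : X :=
  if y = phi e0 e1 e2 e4 Af q1 x ∧ z = phi e0 e1 e2 e4 Af q2 x then
    phi e0 e1 e2 e4 Af p x
  else if (x = e2 ∨ y = e2 ∨ z = e2) ∧ y ≠ e1 ∧ y ≠ e4 ∧ z ≠ e1 ∧ z ≠ e4 then e2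
  else e4

/-- `φ_p` as a unary operation (member of arity-1 part of a clone). -/
def phi1 (p : P) : (Fin 1 → X) → X := fun x => phi e0 e1 e2 e4 Af p (x 0)

/-- `m_p^{q₁,q₂}` as a ternary operation. -/
def m3 (p q1 q2 : P) : (Fin 3 → X) → X :=
  fun x => mOp e0 e1 e2 e4 Af p q1 q2 (x 0) (x 1) (x 2)

/-- The family `Φ_Q = {φ_p : p ∈ Q}`, as a family of operations indexed by arity. -/
def PhiFam (Q : Set P) : ∀ n : ℕ, Set ((Fin (n + 1) → X) → X)
  | 0 => {f | ∃ p ∈ Q, f = phi1 e0 e1 e2 e4 Af p}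
  | _ + 1 => ∅

/-- The family `M = {m_p^{q₁,q₂} : p ≤ q₁ ∨ q₂}`, as a family of operations indexed by arity. -/
def MFam : ∀ n : ℕ, Set ((Fin (n + 1) → X) → X)
  | 2 => {f | ∃ p q1 q2 : P, p ≤ q1 ⊔ q2 ∧ f = m3 e0 e1 e2 e4 Af p q1 q2}
  | _ => ∅

/-- The clone `C = ⟨Φ ∪ M⟩`. -/
def CClone : Clone X :=
  Clone.cloneGen fun n => PhiFam e0 e1 e2 e4 Af Set.univ n ∪ MFam e0 e1 e2 e4 Af n

/-- A function depends on its `i`-th variable iff it takes different values on two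
tuples differing only in the `i`-th coordinate. -/
def DependsOnVar {n : ℕ} (t : (Fin n → X) → X) (i : Fin n) : Prop :=
  ∃ a b : Fin n → X, (∀ j, j ≠ i → a j = b j) ∧ t a ≠ t b

/-- A unary function is distracted iff it takes a value in `{2, 4}` somewhere on `A`. -/
def Distracted (f : X → X) : Prop :=
  ∃ a ∈ Aset e0 e1 e2 e4, f a = e2 ∨ f a = e4

/-- The unary function `X → X` corresponding to a unary operation. -/
def toFun1 (u : (Fin 1 → X) → X) : X → X := fun a => u fun _ => a

/-- An `n`-ary member of `C` is unspoilt iff some substitution of unary members of `C`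
into it yields an element of `Φ`. -/
def Unspoilt {n : ℕ} (t : (Fin (n + 1) → X) → X) : Prop :=
  ∃ ts : Fin (n + 1) → (Fin 1 → X) → X,
    (∀ i, ts i ∈ (CClone e0 e1 e2 e4 Af).carrier 0) ∧
    (fun x : Fin 1 → X => t fun i => ts i x) ∈ PhiFam e0 e1 e2 e4 Af Set.univ 0

/-- The family `S` of all spoilt members of `C`. -/
def SpoiltFam (n : ℕ) : Set ((Fin (n + 1) → X) → X) :=
  {t | t ∈ (CClone e0 e1 e2 e4 Af).carrier n ∧ ¬ Unspoilt e0 e1 e2 e4 Af t}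

/-- The clone `C_I = ⟨Φ_I ∪ M ∪ S⟩`. -/
def CI (I : Set P) : Clone X :=
  Clone.cloneGen fun n =>
    PhiFam e0 e1 e2 e4 Af I n ∪ MFam e0 e1 e2 e4 Af n ∪ SpoiltFam e0 e1 e2 e4 Af n

end Construction

/-- An ideal of a join-semilattice: a downward closed subset closed under finite joins. -/
def IsIdealP {P : Type v} [SemilatticeSup P] (I : Set P) : Prop :=
  (∀ p q : P, p ≤ q → q ∈ I → p ∈ I) ∧ ∀ p q : P, p ∈ I → q ∈ I → p ⊔ q ∈ I

/-- The ideal of `P` generated by a subset `I`. -/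
def idealGen {P : Type v} [SemilatticeSup P] (I : Set P) : Set P :=
  ⋂₀ {J : Set P | IsIdealP J ∧ I ⊆ J}

/-
Everything rests on the identity `m_p^{q₁,q₂}(x, φ_{q₁} x, φ_{q₂} x) = φ_p x` for `p ≤ q₁ ∨ q₂`:
in any clone containing `M`, the indices `p` with `φ_p` in the clone form an ideal of `P`.
Since every `C_I` contains `M` and `S`, the supremum of the `C_I` contains `φ_p` for every `p`
in the ideal generated by `⋃ 𝓘`, hence contains `C_{⋁𝓘}`; the converse inclusion is monotonicity
of `I ↦ C_I`.
-/

namespace Clone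

variable {X : Type u}

theorem subset_cloneGen (F : ∀ n : ℕ, Set ((Fin (n + 1) → X) → X)) (n : ℕ) :
    F n ⊆ (cloneGen F).carrier n :=
  fun _ hf => Set.mem_iInter₂.2 fun _ hC => hC n hf

theorem cloneGen_le {F : ∀ n : ℕ, Set ((Fin (n + 1) → X) → X)} {C : Clone X}
    (h : ∀ n, F n ⊆ C.carrier n) : cloneGen F ≤ C :=
  sInf_le h

theorem cloneGen_mono {F G : ∀ n : ℕ, Set ((Fin (n + 1) → X) → X)}
    (h : ∀ n, F n ⊆ G n) : cloneGen F ≤ cloneGen G :=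
  cloneGen_le fun n => (h n).trans (subset_cloneGen G n)

end Clone

theorem subset_idealGen {P : Type v} [SemilatticeSup P] (T : Set P) : T ⊆ idealGen T :=
  Set.subset_sInter fun _ hJ => hJ.2

theorem idealGen_subset {P : Type v} [SemilatticeSup P] {T J : Set P}
    (hJ : IsIdealP J) (hTJ : T ⊆ J) : idealGen T ⊆ J :=
  Set.sInter_subset_of_mem ⟨hJ, hTJ⟩

section Construction

variable {X : Type u} {P : Type v} (e0 e1 e2 e4 : X) (Af : P → Set X)

theorem phiFam_mono {I J : Set P} (hIJ : I ⊆ J) (n : ℕ) :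
    PhiFam e0 e1 e2 e4 Af I n ⊆ PhiFam e0 e1 e2 e4 Af J n := by
  cases n with
  | zero => exact fun _ ⟨p, hp, hf⟩ => ⟨p, hIJ hp, hf⟩
  | succ n => exact subset_rfl

theorem phiFam_subset_carrier {I : Set P} {D : Clone X}
    (h : ∀ p ∈ I, phi1 e0 e1 e2 e4 Af p ∈ D.carrier 0) (n : ℕ) :
    PhiFam e0 e1 e2 e4 Af I n ⊆ D.carrier n := by
  cases n with
  | zero => exact fun _ ⟨p, hp, hf⟩ => hf ▸ h p hp
  | succ n => exact Set.empty_subset _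

theorem CI_mono [SemilatticeSup P] {I J : Set P} (hIJ : I ⊆ J) :
    CI e0 e1 e2 e4 Af I ≤ CI e0 e1 e2 e4 Af J :=
  Clone.cloneGen_mono fun n =>
    Set.union_subset_union_left _
      (Set.union_subset_union_left _ (phiFam_mono e0 e1 e2 e4 Af hIJ n))

theorem mOp_phi (p q1 q2 : P) (x : X) :
    mOp e0 e1 e2 e4 Af p q1 q2 x (phi e0 e1 e2 e4 Af q1 x) (phi e0 e1 e2 e4 Af q2 x)
      = phi e0 e1 e2 e4 Af p x := by
  simp [mOp]

theorem phi1_mem_of_le_sup [SemilatticeSup P] {D : Clone X}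
    (hM : ∀ n, MFam e0 e1 e2 e4 Af n ⊆ D.carrier n)
    {p q1 q2 : P} (hle : p ≤ q1 ⊔ q2)
    (h1 : phi1 e0 e1 e2 e4 Af q1 ∈ D.carrier 0) (h2 : phi1 e0 e1 e2 e4 Af q2 ∈ D.carrier 0) :
    phi1 e0 e1 e2 e4 Af p ∈ D.carrier 0 := by
  have hcomp := D.comp_mem (m3 e0 e1 e2 e4 Af p q1 q2)
    ![fun x => x 0, phi1 e0 e1 e2 e4 Af q1, phi1 e0 e1 e2 e4 Af q2]
    (hM 2 ⟨p, q1, q2, hle, rfl⟩) fun i => by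
      fin_cases i
      exacts [D.proj_mem 0 0, h1, h2]
  convert hcomp using 1
  funext x
  exact (mOp_phi e0 e1 e2 e4 Af p q1 q2 (x 0)).symm

theorem isIdealP_phi1_mem [SemilatticeSup P] {D : Clone X}
    (hM : ∀ n, MFam e0 e1 e2 e4 Af n ⊆ D.carrier n) :
    IsIdealP {p | phi1 e0 e1 e2 e4 Af p ∈ D.carrier 0} :=
  ⟨fun _ _ hpq hq => phi1_mem_of_le_sup e0 e1 e2 e4 Af hM (le_sup_of_le_left hpq) hq hq,
   fun _ _ hp hq => phi1_mem_of_le_sup e0 e1 e2 e4 Af hM le_rfl hp hq⟩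

end Construction

theorem sSup_CI_general
    {X : Type u} {P : Type v} [SemilatticeSup P]
    (e0 e1 e2 e4 : X)
    (Af : P → Set X)
    (𝓘 : Set (Set P)) (hne : 𝓘.Nonempty) :
    sSup ((fun I => CI e0 e1 e2 e4 Af I) '' 𝓘)
      = CI e0 e1 e2 e4 Af (idealGen (⋃₀ 𝓘)) := by
  refine le_antisymm (sSup_le ?_) (Clone.cloneGen_le fun n => ?_)
  · rintro _ ⟨I, hI, rfl⟩
    exact CI_mono e0 e1 e2 e4 Af ((Set.subset_sUnion_of_mem hI).trans (subset_idealGen _))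
  · set D := sSup ((fun I => CI e0 e1 e2 e4 Af I) '' 𝓘)
    have hgen : ∀ I ∈ 𝓘, ∀ n, PhiFam e0 e1 e2 e4 Af I n ∪ MFam e0 e1 e2 e4 Af n
        ∪ SpoiltFam e0 e1 e2 e4 Af n ⊆ D.carrier n :=
      fun I hI n => (Clone.subset_cloneGen _ n).trans
        (le_sSup (Set.mem_image_of_mem (fun I => CI e0 e1 e2 e4 Af I) hI) n)
    obtain ⟨I₀, hI₀⟩ := hne
    have hM : ∀ n, MFam e0 e1 e2 e4 Af n ⊆ D.carrier n :=
      fun n => Set.subset_union_right.trans (Set.subset_union_left.trans (hgen I₀ hI₀ n))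
    have hPhi : ⋃₀ 𝓘 ⊆ {p | phi1 e0 e1 e2 e4 Af p ∈ D.carrier 0} := by
      rintro p ⟨I, hI, hp⟩
      exact hgen I hI 0 (Or.inl (Or.inl ⟨p, hp, rfl⟩))
    refine Set.union_subset (Set.union_subset ?_ (hM n))
      (Set.subset_union_right.trans (hgen I₀ hI₀ n))
    exact phiFam_subset_carrier e0 e1 e2 e4 Af
      (idealGen_subset (isIdealP_phi1_mem e0 e1 e2 e4 Af hM) hPhi) n

/-- Lemma 8: for a nonempty family of ideals `𝓘`, the supremum of the clones `C_I`
(`I ∈ 𝓘`) in the clone lattice is `C_(⋁𝓘)`, where `⋁𝓘` is the ideal generated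
by `⋃₀ 𝓘`. -/
theorem sSup_CI
    {X : Type u} {P : Type v} [Infinite X] [SemilatticeSup P]
    (e0 e1 e2 e4 : X)
    (hdist : e0 ≠ e1 ∧ e0 ≠ e2 ∧ e0 ≠ e4 ∧ e1 ≠ e2 ∧ e1 ≠ e4 ∧ e2 ≠ e4)
    (hcard : Cardinal.lift.{u} (Cardinal.mk P) ≤ Cardinal.lift.{v} (2 ^ Cardinal.mk X))
    (Af : P → Set X) (hAf : ∀ p : P, Af p ⊆ Aset e0 e1 e2 e4)
    (hcover : ∀ (p : P) (k : ℕ) (q : Fin k → P),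
      (∀ i, p ≠ q i) → ¬ Af p ⊆ ⋃ i, Af (q i))
    (𝓘 : Set (Set P)) (h𝓘 : ∀ I ∈ 𝓘, IsIdealP I) (hne : 𝓘.Nonempty) :
    sSup ((fun I => CI e0 e1 e2 e4 Af I) '' 𝓘)
      = CI e0 e1 e2 e4 Af (idealGen (⋃₀ 𝓘)) :=
  sSup_CI_general e0 e1 e2 e4 Af 𝓘 hne
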